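/- arXiv:1608.00800 — 3 statements merged into one kernel-verified Lean document; each statement's English description precedes it below -/
import Mathlib

section
/- (Martingale concentration, Chung–Lu type.) Let m_0 ∈ ℝ and let M_0 = m_0, M_1, …, M_k be a martingale with respect to its natural filtration F_i = σ(M_0,…,M_i) such that for each 1 ≤ i ≤ k: (i) |M_i − M_{i−1}| ≤ m for some m > 0, and (ii) the conditional variance satisfies Var[M_i | F_{i−1}] = E[(M_i − E[M_i | F_{i−1}])² | F_{i−1}] ≤ σ_i² for some real σ_i. Then for any λ > 0, P[M_k − m_0 ≥ λ] ≤ exp(−λ² / (2(Σ_{i=1}^k σ_i² + mλ/3))). -/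
/-!
Bernstein's argument. Write `φ(u) = eᵘ - 1 - u`. Since `φ(x) ≤ φ(|x|)` and `φ(x)/x²` increases
on `(0, ∞)`, `eˣ ≤ 1 + x + φ(u)/u² · x²` whenever `|x| ≤ u`. Applied to
`x = t(Mᵢ - Mᵢ₋₁)` with `u = tb`, the martingale property kills the linear term and the variance
bound controls the quadratic one:
`E[e^{t(Mᵢ - Mᵢ₋₁)} | Fᵢ₋₁] ≤ 1 + φ(tb)/b² · σᵢ² ≤ exp(φ(tb)/b² · σᵢ²)`.
Pulling out the `Fᵢ₋₁`-measurable factor `e^{t(Mᵢ₋₁ - m₀)}` and iterating bounds the moment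
generating function of `Mₖ - m₀` by `exp(φ(tb)/b² · Σ σᵢ²)`. The Chernoff bound at
`t = λ / (Σ σᵢ² + bλ/3)` together with `φ(u)(1 - u/3) ≤ u²/2`, a comparison of the exponential
series with a geometric one, gives the claim.
-/

open MeasureTheory Real Finset ProbabilityTheory
open scoped Nat

namespace Real

lemma exp_sub_one_sub_eq_tsum (x : ℝ) :
    exp x - 1 - x = ∑' n : ℕ, x ^ (n + 2) / (n + 2)! := by
  simp only [exp_eq_exp_ℝ, NormedSpace.exp_eq_tsum_div]
  rw [← (summable_pow_div_factorial x).sum_add_tsum_nat_add 2]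
  simp only [sum_range_succ, range_one, sum_singleton, pow_zero, pow_one, Nat.factorial_zero,
    Nat.factorial_one, Nat.cast_one, div_one]
  ring

lemma summable_pow_add_two_div_factorial (x : ℝ) :
    Summable fun n : ℕ ↦ x ^ (n + 2) / (n + 2)! :=
  (summable_nat_add_iff 2).mpr (summable_pow_div_factorial x)

lemma exp_sub_one_sub_mul_sq_le {x u : ℝ} (hx : 0 ≤ x) (hxu : x ≤ u) :
    (exp x - 1 - x) * u ^ 2 ≤ (exp u - 1 - u) * x ^ 2 := by
  rw [exp_sub_one_sub_eq_tsum, exp_sub_one_sub_eq_tsum, ← tsum_mul_right, ← tsum_mul_right]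
  refine Summable.tsum_le_tsum (fun n ↦ ?_) ((summable_pow_add_two_div_factorial x).mul_right _)
    ((summable_pow_add_two_div_factorial u).mul_right _)
  rw [div_mul_eq_mul_div, div_mul_eq_mul_div]
  gcongr ?_ / _
  calc x ^ (n + 2) * u ^ 2 = x ^ n * (x * u) ^ 2 := by ring
    _ ≤ u ^ n * (x * u) ^ 2 := by gcongr
    _ = u ^ (n + 2) * x ^ 2 := by ring

lemma exp_sub_one_sub_le_abs (x : ℝ) : exp x - 1 - x ≤ exp |x| - 1 - |x| := by
  rcases le_or_gt 0 x with hx | hx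
  · rw [abs_of_nonneg hx]
  · have := sinh_le_self_iff.mpr hx.le
    rw [sinh_eq] at this
    rw [abs_of_neg hx]
    linarith

lemma exp_le_one_add_add_mul_sq {x u : ℝ} (hu : 0 < u) (hx : |x| ≤ u) :
    exp x ≤ 1 + x + (exp u - 1 - u) / u ^ 2 * x ^ 2 := by
  have h := exp_sub_one_sub_mul_sq_le (abs_nonneg x) hx
  rw [sq_abs] at h
  have h' : exp x - 1 - x ≤ (exp u - 1 - u) / u ^ 2 * x ^ 2 := by
    rw [div_mul_eq_mul_div, le_div_iff₀ (by positivity)]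
    exact (mul_le_mul_of_nonneg_right (exp_sub_one_sub_le_abs x) (sq_nonneg u)).trans h
  linarith

lemma exp_sub_one_sub_mul_one_sub_div_three_le {u : ℝ} (hu : 0 ≤ u) :
    (exp u - 1 - u) * (1 - u / 3) ≤ u ^ 2 / 2 := by
  rcases le_or_gt 3 u with hu3 | hu3
  · have : 0 ≤ exp u - 1 - u := by linarith [add_one_le_exp u]
    nlinarith [sq_nonneg u]
  have hr : u / 3 < 1 := by linarith
  have hterm (n : ℕ) : u ^ (n + 2) / (n + 2)! ≤ u ^ 2 / 2 * (u / 3) ^ n := by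
    have hfact : (2 * 3 ^ n : ℝ) ≤ (n + 2)! := by
      have := Nat.factorial_mul_pow_le_factorial (m := 2) (n := n)
      rw [add_comm 2 n] at this
      exact_mod_cast this
    calc u ^ (n + 2) / (n + 2)! ≤ u ^ (n + 2) / (2 * 3 ^ n) := by gcongr
      _ = u ^ 2 / 2 * (u / 3) ^ n := by rw [div_pow]; field_simp; ring
  have hsum : exp u - 1 - u ≤ u ^ 2 / 2 * (1 - u / 3)⁻¹ := by
    rw [exp_sub_one_sub_eq_tsum, ← tsum_geometric_of_lt_one (by positivity) hr, ← tsum_mul_left]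
    exact Summable.tsum_le_tsum hterm (summable_pow_add_two_div_factorial u)
      ((summable_geometric_of_lt_one (by positivity) hr).mul_left _)
  rwa [← div_eq_mul_inv, le_div_iff₀ (by linarith)] at hsum

end Real

/- With `D = V + bλ/3` and `u = tb` one has `V = D (1 - u/3)` and `tD = λ`, so the bound
`(eᵘ - 1 - u)(1 - u/3) ≤ u²/2` turns the exponent into `-tλ + tλ/2`. -/
lemma neg_mul_add_exp_sub_one_sub_mul_le {V b lam t : ℝ} (hV : 0 ≤ V) (hb : 0 < b)
    (hlam : 0 < lam) (ht : t = lam / (V + b * lam / 3)) :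
    -t * lam + (exp (t * b) - 1 - t * b) / b ^ 2 * V ≤ -(lam ^ 2) / (2 * (V + b * lam / 3)) := by
  set D := V + b * lam / 3
  have hD : 0 < D := by positivity
  have htD : t * D = lam := by rw [ht]; field_simp
  have hVD : V = D * (1 - t * b / 3) := by linear_combination (b / 3) * htD
  have ht0 : 0 ≤ t := by rw [ht]; positivity
  calc -t * lam + (exp (t * b) - 1 - t * b) / b ^ 2 * V
      = -t * lam + (exp (t * b) - 1 - t * b) * (1 - t * b / 3) * (D / b ^ 2) := by
        rw [hVD]; ring
    _ ≤ -t * lam + (t * b) ^ 2 / 2 * (D / b ^ 2) := by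
        gcongr
        exact exp_sub_one_sub_mul_one_sub_div_three_le (by positivity)
    _ = -(lam ^ 2) / (2 * D) := by
        rw [← htD]; field_simp; ring

section Probability

variable {Ω : Type*} {𝓕 mΩ : MeasurableSpace Ω} {μ : Measure Ω} {M : ℕ → Ω → ℝ}

lemma condExp_le_one_add_mul_of_le_quadratic [IsFiniteMeasure μ] (h𝓕 : 𝓕 ≤ mΩ)
    {X Y : Ω → ℝ} {t c s : ℝ} (hc : 0 ≤ c) (hX : Integrable X μ)
    (hX2 : Integrable (fun ω ↦ X ω ^ 2) μ) (hY : Integrable Y μ)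
    (hYX : ∀ ω, Y ω ≤ 1 + t * X ω + c * X ω ^ 2) (hmean : μ[X | 𝓕] =ᵐ[μ] 0)
    (hvar : μ[fun ω ↦ X ω ^ 2 | 𝓕] ≤ᵐ[μ] fun _ ↦ s) :
    μ[Y | 𝓕] ≤ᵐ[μ] fun _ ↦ 1 + c * s := by
  set X2 : Ω → ℝ := fun ω ↦ X ω ^ 2
  have hmono := condExp_mono (m := 𝓕) hY
    (((integrable_const 1).add (hX.smul t)).add (hX2.smul c)) (ae_of_all _ hYX)
  filter_upwards [hmono, condExp_add ((integrable_const 1).add (hX.smul t)) (hX2.smul c) 𝓕,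
    condExp_add (integrable_const 1) (hX.smul t) 𝓕, condExp_smul t X 𝓕, condExp_smul c X2 𝓕,
    hmean, hvar] with ω hY hadd₁ hadd₂ hsmul₁ hsmul₂ hX0 hX2s
  simp only [Pi.add_apply, Pi.smul_apply, smul_eq_mul, condExp_const h𝓕, Pi.zero_apply] at *
  rw [hadd₁, hadd₂, hsmul₁, hsmul₂, hX0] at hY
  nlinarith [mul_le_mul_of_nonneg_left hX2s hc]

lemma condExp_exp_mul_le [IsFiniteMeasure μ] (h𝓕 : 𝓕 ≤ mΩ) {X : Ω → ℝ} (hX : Measurable X)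
    {b t s : ℝ} (hb : 0 < b) (ht : 0 < t) (hXb : ∀ ω, |X ω| ≤ b) (hmean : μ[X | 𝓕] =ᵐ[μ] 0)
    (hvar : μ[fun ω ↦ X ω ^ 2 | 𝓕] ≤ᵐ[μ] fun _ ↦ s) :
    μ[fun ω ↦ exp (t * X ω) | 𝓕] ≤ᵐ[μ] fun _ ↦ exp ((exp (t * b) - 1 - t * b) / b ^ 2 * s) := by
  have hc : 0 ≤ (exp (t * b) - 1 - t * b) / b ^ 2 := by
    have := add_one_le_exp (t * b)
    exact div_nonneg (by linarith) (sq_nonneg b)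
  have hquad (ω : Ω) : exp (t * X ω) ≤
      1 + t * X ω + (exp (t * b) - 1 - t * b) / b ^ 2 * X ω ^ 2 := by
    have htX : |t * X ω| ≤ t * b := by
      rw [abs_mul, abs_of_pos ht]; exact mul_le_mul_of_nonneg_left (hXb ω) ht.le
    convert exp_le_one_add_add_mul_sq (mul_pos ht hb) htX using 2
    field_simp
  have hXint : Integrable X μ :=
    .of_bound hX.aestronglyMeasurable b (ae_of_all _ fun ω ↦ by simpa using hXb ω)
  have hX2int : Integrable (fun ω ↦ X ω ^ 2) μ :=
    .of_bound (hX.pow_const 2).aestronglyMeasurable (b ^ 2) (ae_of_all _ fun ω ↦ by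
      simpa using pow_le_pow_left₀ (abs_nonneg _) (hXb ω) 2)
  have hexpint : Integrable (fun ω ↦ exp (t * X ω)) μ :=
    .of_bound (hX.const_mul t).exp.aestronglyMeasurable (exp (t * b)) (ae_of_all _ fun ω ↦ by
      rw [norm_of_nonneg (exp_nonneg _), exp_le_exp]
      exact mul_le_mul_of_nonneg_left ((le_abs_self _).trans (hXb ω)) ht.le)
  filter_upwards [condExp_le_one_add_mul_of_le_quadratic h𝓕 hc hXint hX2int hexpint hquad
    hmean hvar] with ω hω
  exact hω.trans (by linarith [add_one_le_exp ((exp (t * b) - 1 - t * b) / b ^ 2 * s)])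

lemma integral_mul_le_of_condExp_le [IsFiniteMeasure μ] (h𝓕 : 𝓕 ≤ mΩ) {G E : Ω → ℝ} {c : ℝ}
    (hGm : StronglyMeasurable[𝓕] G) (hG0 : 0 ≤ G) (hE0 : 0 ≤ E) (hG : Integrable G μ)
    (hE : Integrable E μ) (hGE : Integrable (G * E) μ) (hEc : μ[E | 𝓕] ≤ᵐ[μ] fun _ ↦ c) :
    ∫ ω, G ω * E ω ∂μ ≤ c * ∫ ω, G ω ∂μ := by
  calc ∫ ω, G ω * E ω ∂μ = ∫ ω, μ[G * E | 𝓕] ω ∂μ := (integral_condExp h𝓕).symm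
    _ = ∫ ω, G ω * μ[E | 𝓕] ω ∂μ :=
      integral_congr_ae (condExp_mul_of_stronglyMeasurable_left hGm hGE hE)
    _ ≤ ∫ ω, G ω * c ∂μ := by
      refine integral_mono_of_nonneg ?_ (hG.mul_const c) ?_
      · filter_upwards [condExp_nonneg (m := 𝓕) (ae_of_all μ hE0)] with ω hω
        exact mul_nonneg (hG0 ω) hω
      · filter_upwards [hEc] with ω hω
        exact mul_le_mul_of_nonneg_left hω (hG0 ω)
    _ = c * ∫ ω, G ω ∂μ := by rw [integral_mul_const, mul_comm]

lemma integrable_exp_mul_sub_zero [IsFiniteMeasure μ] (hM : ∀ i, Measurable (M i)) {n : ℕ}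
    {b : ℝ} (t : ℝ) (hdiff : ∀ i < n, ∀ ω, |M (i + 1) ω - M i ω| ≤ b) :
    Integrable (fun ω ↦ exp (t * (M n ω - M 0 ω))) μ := by
  refine .of_bound (((hM n).sub (hM 0)).const_mul t).exp.aestronglyMeasurable
    (exp (|t| * (n * b))) (ae_of_all _ fun ω ↦ ?_)
  have hdist : |M n ω - M 0 ω| ≤ n * b := by
    have := dist_le_range_sum_of_dist_le (f := fun i ↦ M i ω) (d := fun _ ↦ b) n
      fun hk ↦ by rw [Real.dist_eq, abs_sub_comm]; exact hdiff _ hk ω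
    simpa [Real.dist_eq, abs_sub_comm] using this
  rw [norm_of_nonneg (exp_nonneg _), exp_le_exp]
  calc t * (M n ω - M 0 ω) ≤ |t| * |M n ω - M 0 ω| := by rw [← abs_mul]; exact le_abs_self _
    _ ≤ |t| * (n * b) := by gcongr

lemma exists_filtration_adapted_of_eq_iSup_comap {F : ℕ → MeasurableSpace Ω}
    (hF : ∀ i, F i = ⨆ j ∈ Set.Iic i, MeasurableSpace.comap (M j) inferInstance)
    (hFm : ∀ i, F i ≤ mΩ) : ∃ ℱ : Filtration ℕ mΩ, ⇑ℱ = F ∧ Adapted ℱ M := by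
  have hmono : Monotone F := fun i j hij ↦ by
    rw [hF i, hF j]
    exact biSup_mono fun l hl ↦ Set.Iic_subset_Iic.mpr hij hl
  refine ⟨⟨F, hmono, hFm⟩, rfl, fun i ↦ measurable_iff_comap_le.mpr ?_⟩
  rw [show (⟨F, hmono, hFm⟩ : Filtration ℕ mΩ) i = F i from rfl, hF i]
  exact le_iSup₂ (f := fun j (_ : j ∈ Set.Iic i) ↦ MeasurableSpace.comap (M j) _) i
    (Set.mem_Iic.mpr le_rfl)

variable {ℱ : Filtration ℕ mΩ}

lemma integral_exp_mul_sub_zero_succ_le [IsFiniteMeasure μ] (hM : Adapted ℱ M)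
    (hInt : ∀ i, Integrable (M i) μ) {i : ℕ} {b t s : ℝ} (hb : 0 < b) (ht : 0 < t)
    (hG : Integrable (fun ω ↦ exp (t * (M i ω - M 0 ω))) μ)
    (hdiff : ∀ ω, |M (i + 1) ω - M i ω| ≤ b) (hmart : μ[M (i + 1) | ℱ i] =ᵐ[μ] M i)
    (hvar : μ[fun ω ↦ (M (i + 1) ω - M i ω) ^ 2 | ℱ i] ≤ᵐ[μ] fun _ ↦ s) :
    ∫ ω, exp (t * (M (i + 1) ω - M 0 ω)) ∂μ ≤
      exp ((exp (t * b) - 1 - t * b) / b ^ 2 * s) * ∫ ω, exp (t * (M i ω - M 0 ω)) ∂μ := by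
  have hMm (j : ℕ) : Measurable (M j) := hM.measurable
  have hmean : μ[M (i + 1) - M i | ℱ i] =ᵐ[μ] 0 := by
    filter_upwards [condExp_sub (hInt (i + 1)) (hInt i) (ℱ i), hmart] with ω hsub hω
    rw [hsub, Pi.sub_apply, hω,
      condExp_of_stronglyMeasurable (ℱ.le i) (hM i).stronglyMeasurable (hInt i)]
    simp
  have hE := condExp_exp_mul_le (ℱ.le i) ((hMm (i + 1)).sub (hMm i)) hb ht hdiff hmean hvar
  have hGm : StronglyMeasurable[ℱ i] fun ω ↦ exp (t * (M i ω - M 0 ω)) :=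
    (((hM i).sub ((hM 0).mono (ℱ.mono i.zero_le) le_rfl)).const_mul t).exp.stronglyMeasurable
  have hEm : AEStronglyMeasurable (fun ω ↦ exp (t * (M (i + 1) - M i) ω)) μ :=
    (((hMm (i + 1)).sub (hMm i)).const_mul t).exp.aestronglyMeasurable
  have hEbound : ∀ᵐ ω ∂μ, ‖exp (t * (M (i + 1) - M i) ω)‖ ≤ exp (t * b) :=
    ae_of_all _ fun ω ↦ by
      rw [norm_of_nonneg (exp_nonneg _), exp_le_exp]
      exact mul_le_mul_of_nonneg_left ((le_abs_self _).trans (hdiff ω)) ht.le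
  have hsplit (ω : Ω) : exp (t * (M (i + 1) ω - M 0 ω)) =
      exp (t * (M i ω - M 0 ω)) * exp (t * (M (i + 1) - M i) ω) := by
    rw [← exp_add, Pi.sub_apply]; ring_nf
  simp_rw [hsplit]
  exact integral_mul_le_of_condExp_le (ℱ.le i) hGm (fun _ ↦ exp_nonneg _) (fun _ ↦ exp_nonneg _)
    hG (.of_bound hEm _ hEbound) (hG.mul_bdd hEm hEbound) hE

theorem integral_exp_mul_sub_zero_le [IsProbabilityMeasure μ] (hM : Adapted ℱ M)
    (hInt : ∀ i, Integrable (M i) μ) {n : ℕ} {b t : ℝ} {v : ℕ → ℝ} (hb : 0 < b) (ht : 0 < t)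
    (hdiff : ∀ i < n, ∀ ω, |M (i + 1) ω - M i ω| ≤ b)
    (hmart : ∀ i < n, μ[M (i + 1) | ℱ i] =ᵐ[μ] M i)
    (hvar : ∀ i < n, μ[fun ω ↦ (M (i + 1) ω - M i ω) ^ 2 | ℱ i] ≤ᵐ[μ] fun _ ↦ v i) :
    ∫ ω, exp (t * (M n ω - M 0 ω)) ∂μ ≤
      exp ((exp (t * b) - 1 - t * b) / b ^ 2 * ∑ i ∈ range n, v i) := by
  induction n with
  | zero => simp
  | succ n ih =>
    have hG := integrable_exp_mul_sub_zero (μ := μ) (n := n) (fun j ↦ hM.measurable (i := j)) t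
      fun i hi ↦ hdiff i (by omega)
    calc ∫ ω, exp (t * (M (n + 1) ω - M 0 ω)) ∂μ
        ≤ exp ((exp (t * b) - 1 - t * b) / b ^ 2 * v n) * ∫ ω, exp (t * (M n ω - M 0 ω)) ∂μ :=
          integral_exp_mul_sub_zero_succ_le hM hInt hb ht hG (hdiff n n.lt_succ_self)
            (hmart n n.lt_succ_self) (hvar n n.lt_succ_self)
      _ ≤ exp ((exp (t * b) - 1 - t * b) / b ^ 2 * v n) *
            exp ((exp (t * b) - 1 - t * b) / b ^ 2 * ∑ i ∈ range n, v i) := by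
          gcongr
          exact ih (fun i hi ↦ hdiff i (by omega)) (fun i hi ↦ hmart i (by omega))
            (fun i hi ↦ hvar i (by omega))
      _ = exp ((exp (t * b) - 1 - t * b) / b ^ 2 * ∑ i ∈ range (n + 1), v i) := by
          rw [← exp_add, sum_range_succ]; ring_nf

theorem measureReal_le_sub_zero_le_exp [IsProbabilityMeasure μ] (hM : Adapted ℱ M)
    (hInt : ∀ i, Integrable (M i) μ) {n : ℕ} {b lam : ℝ} {v : ℕ → ℝ} (hb : 0 < b)
    (hlam : 0 < lam) (hv : ∀ i, 0 ≤ v i) (hdiff : ∀ i < n, ∀ ω, |M (i + 1) ω - M i ω| ≤ b)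
    (hmart : ∀ i < n, μ[M (i + 1) | ℱ i] =ᵐ[μ] M i)
    (hvar : ∀ i < n, μ[fun ω ↦ (M (i + 1) ω - M i ω) ^ 2 | ℱ i] ≤ᵐ[μ] fun _ ↦ v i) :
    μ.real {ω | lam ≤ M n ω - M 0 ω} ≤
      exp (-(lam ^ 2) / (2 * (∑ i ∈ range n, v i + b * lam / 3))) := by
  set t := lam / (∑ i ∈ range n, v i + b * lam / 3) with ht
  have ht0 : 0 < t := by have := sum_nonneg fun i (_ : i ∈ range n) ↦ hv i; positivity
  calc μ.real {ω | lam ≤ M n ω - M 0 ω}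
      ≤ exp (-t * lam) * mgf (fun ω ↦ M n ω - M 0 ω) μ t :=
        measure_ge_le_exp_mul_mgf lam ht0.le
          (integrable_exp_mul_sub_zero (fun j ↦ hM.measurable (i := j)) t hdiff)
    _ ≤ exp (-t * lam) * exp ((exp (t * b) - 1 - t * b) / b ^ 2 * ∑ i ∈ range n, v i) := by
        gcongr
        exact integral_exp_mul_sub_zero_le hM hInt hb ht0 hdiff hmart hvar
    _ ≤ _ := by
        rw [← exp_add, exp_le_exp]
        exact neg_mul_add_exp_sub_one_sub_mul_le (sum_nonneg fun i _ ↦ hv i) hb hlam ht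

end Probability

/-- **Martingale concentration (Chung–Lu type).** Let `M_0 = m_0, M_1, …, M_k` be a
martingale with respect to its natural filtration `F_i = σ(M_0,…,M_i)` such that for each
`1 ≤ i ≤ k` the differences satisfy `|M_i - M_{i-1}| ≤ b` and the conditional variance
satisfies `Var[M_i | F_{i-1}] ≤ σ_i²`. Then for any `λ > 0`,
`P[M_k - m_0 ≥ λ] ≤ exp(-λ² / (2(Σ σ_i² + bλ/3)))`. -/
theorem martingale_concentration {Ω : Type*} [m : MeasurableSpace Ω]
    (μ : Measure Ω) [IsProbabilityMeasure μ]
    (k : ℕ) (M : ℕ → Ω → ℝ) (m0 : ℝ) (hM0 : ∀ ω, M 0 ω = m0)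
    -- `F` is the natural filtration of the sequence `M`
    (F : ℕ → MeasurableSpace Ω)
    (hF : ∀ i, F i = ⨆ j ∈ Set.Iic i, MeasurableSpace.comap (M j)
      (inferInstance : MeasurableSpace ℝ))
    (hFm : ∀ i, F i ≤ m)
    (hInt : ∀ i, Integrable (M i) μ)
    -- the martingale property
    (hmart : ∀ i, 1 ≤ i → i ≤ k → condExp (F (i - 1)) μ (M i) =ᵐ[μ] M (i - 1))
    -- (i) bounded differences
    (b : ℝ) (hb : 0 < b)
    (hdiff : ∀ i, 1 ≤ i → i ≤ k → ∀ ω, |M i ω - M (i - 1) ω| ≤ b)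
    -- (ii) bounded conditional variance
    (σ : ℕ → ℝ)
    (hvar : ∀ i, 1 ≤ i → i ≤ k →
      condExp (F (i - 1)) μ (fun ω => (M i ω - condExp (F (i - 1)) μ (M i) ω) ^ 2)
        ≤ᵐ[μ] fun _ => σ i ^ 2)
    (lam : ℝ) (hlam : 0 < lam) :
    μ {ω | lam ≤ M k ω - m0} ≤
      ENNReal.ofReal (Real.exp (-(lam ^ 2) /
        (2 * ((∑ i ∈ Finset.Icc 1 k, σ i ^ 2) + b * lam / 3)))) := by
  obtain ⟨ℱ, rfl, hadapted⟩ := exists_filtration_adapted_of_eq_iSup_comap hF hFm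
  have hsum : ∑ i ∈ range k, σ (i + 1) ^ 2 = ∑ i ∈ Icc 1 k, σ i ^ 2 := by
    rw [range_eq_Ico, sum_Ico_add' (fun i ↦ σ i ^ 2), Ico_add_one_right_eq_Icc]
  have hmart' (i : ℕ) (hi : i < k) : μ[M (i + 1) | ℱ i] =ᵐ[μ] M i := by
    simpa using hmart (i + 1) (by omega) hi
  have hvar' (i : ℕ) (hi : i < k) :
      μ[fun ω ↦ (M (i + 1) ω - M i ω) ^ 2 | ℱ i] ≤ᵐ[μ] fun _ ↦ σ (i + 1) ^ 2 := by
    refine (condExp_congr_ae ?_).trans_le (by simpa using hvar (i + 1) (by omega) hi)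
    filter_upwards [hmart' i hi] with ω hω
    rw [hω]
  have hbound := measureReal_le_sub_zero_le_exp hadapted hInt hb hlam (fun i ↦ sq_nonneg _)
    (fun i hi ↦ by simpa using hdiff (i + 1) (by omega) (by omega)) hmart' hvar'
  simp only [hM0, hsum] at hbound
  rw [← ofReal_measureReal]
  exact ENNReal.ofReal_le_ofReal hbound
end

section
/- The sequence of random variables M(0,n−a), M(1,1), …, M(n,n−a) forms a martingale with respect to the filtration {F(t,i)}, where F(t,i) is the σ-algebra generated by M(0,n−a),…,M(t,i). -/
open MeasureTheory Filter Finset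

noncomputable section

/-- `P[Bin(t,p) ≥ r]`, the upper tail of the binomial distribution. -/
def binomTail (r t : ℕ) (p : ℝ) : ℝ :=
  ∑ j ∈ Finset.Icc r t, (t.choose j : ℝ) * p ^ j * (1 - p) ^ (t - j)

/-- `δ = max{(n p^r)^{1/(2(r-1))}, (np)^{-1/(4(r-1))}}`. -/
def deltaP (r : ℕ) (p : ℕ → ℝ) (n : ℕ) : ℝ :=
  max (((n : ℝ) * p n ^ r) ^ ((1 : ℝ) / (2 * ((r : ℝ) - 1))))
      (((n : ℝ) * p n) ^ (-(1 : ℝ) / (4 * ((r : ℝ) - 1))))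

/-- `t_0 = ((1+δ)(r-1)!/(n p^r))^{1/(r-1)}`. -/
def tZero (r : ℕ) (p : ℕ → ℝ) (n : ℕ) : ℝ :=
  ((1 + deltaP r p n) * (Nat.factorial (r - 1) : ℝ) / ((n : ℝ) * p n ^ r)) ^
    ((1 : ℝ) / ((r : ℝ) - 1))

/-- `(n π̂(t) - t)/(1 - π̂(t))`. -/
def critFun (r : ℕ) (p : ℕ → ℝ) (n : ℕ) (t : ℕ) : ℝ :=
  ((n : ℝ) * binomTail r t (p n) - t) / (1 - binomTail r t (p n))

/-- `a_c = - min_{t ≤ t_0} (n π̂(t) - t)/(1 - π̂(t))`. -/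
def aCrit (r : ℕ) (p : ℕ → ℝ) (n : ℕ) : ℝ :=
  - Finset.min' ((Finset.range (⌊tZero r p n⌋₊ + 1)).image (critFun r p n))
      (Finset.Nonempty.image (Finset.nonempty_range_iff.mpr (Nat.succ_ne_zero _)) _)

/-- `t_c`, the smallest `t ≤ t_0` attaining the minimum defining `a_c`. -/
def tCrit (r : ℕ) (p : ℕ → ℝ) (n : ℕ) : ℕ :=
  sInf {t : ℕ | t ≤ ⌊tZero r p n⌋₊ ∧ critFun r p n t = - aCrit r p n}

/-- The Bernoulli measure with parameter `q` on `Bool`. -/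
def bernoulliMeasure (q : ℝ) : Measure Bool :=
  (PMF.bernoulli (min q.toNNReal 1) (min_le_right _ _)).toMeasure

instance (q : ℝ) : IsProbabilityMeasure (bernoulliMeasure q) :=
  PMF.toMeasure.isProbabilityMeasure _

/-- The binomial random graph `G(n,q)`: each potential edge is present independently with
probability `q`. A sample is a function `Sym2 (Fin n) → Bool`. -/
def gnp (n : ℕ) (q : ℝ) : Measure (Sym2 (Fin n) → Bool) :=
  Measure.pi fun _ => bernoulliMeasure q

/-- The simple graph determined by a sample `ω` of `G(n,q)`. -/
def toGraph {n : ℕ} (ω : Sym2 (Fin n) → Bool) : SimpleGraph (Fin n) where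
  Adj u v := u ≠ v ∧ ω s(u, v) = true
  symm := ⟨by
    intro u v h
    exact ⟨h.1.symm, by rw [Sym2.eq_swap]; exact h.2⟩⟩
  loopless := ⟨fun v h => h.1 rfl⟩

/-- The number of neighbours of `v` inside the set `S` in the graph given by `ω`. -/
def nbrCount {n : ℕ} (ω : Sym2 (Fin n) → Bool) (S : Finset (Fin n)) (v : Fin n) : ℕ :=
  (S.filter fun u => u ≠ v ∧ ω s(u, v) = true).card

/-- The set of the first `a` vertices, the initially infected set `A(0) = {1,…,a}`. -/
def initSet (n a : ℕ) : Finset (Fin n) :=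
  Finset.univ.filter fun v => v.val < a

/-- One round of bootstrap percolation with threshold `r`. -/
def bstep {n : ℕ} (r : ℕ) (ω : Sym2 (Fin n) → Bool) (S : Finset (Fin n)) : Finset (Fin n) :=
  S ∪ Finset.univ.filter fun v => r ≤ nbrCount ω S v

/-- The final infected set `A_f` of bootstrap percolation with threshold `r` started at `A0`. -/
def finalSet {n : ℕ} (r : ℕ) (ω : Sym2 (Fin n) → Bool) (A0 : Finset (Fin n)) : Finset (Fin n) :=
  (bstep r ω)^[n] A0

/-- The exploration process: `Z(t)`, the set of examined vertices at time `t`. -/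
def expZ {n : ℕ} (r a : ℕ) (ω : Sym2 (Fin n) → Bool) : ℕ → Finset (Fin n)
  | 0 => ∅
  | t + 1 =>
    let Z := expZ r a ω t
    let A := initSet n a ∪ (Finset.univ.filter fun v => a ≤ v.val ∧ r ≤ nbrCount ω Z v)
    if h : (A \ Z).Nonempty then insert ((A \ Z).min' h) Z else Z

/-- The infected set `A(t)` at time `t` of the exploration process. -/
def expA {n : ℕ} (r a : ℕ) (ω : Sym2 (Fin n) → Bool) (t : ℕ) : Finset (Fin n) :=
  initSet n a ∪ (Finset.univ.filter fun v => a ≤ v.val ∧ r ≤ nbrCount ω (expZ r a ω t) v)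

/-- `T`, the smallest `t` with `A(t) = Z(t)`. -/
def expT {n : ℕ} (r a : ℕ) (ω : Sym2 (Fin n) → Bool) : ℕ :=
  sInf {t | expA r a ω t = expZ r a ω t}

/-- `X(t,i)`, the indicator that vertex `a+i` has at least `r` neighbours in `Z(t)`. -/
def expX {n : ℕ} (r a : ℕ) (ω : Sym2 (Fin n) → Bool) (t i : ℕ) : ℝ :=
  if h : 1 ≤ i ∧ a + i ≤ n then
    (if r ≤ nbrCount ω (expZ r a ω t) ⟨a + i - 1, by omega⟩ then 1 else 0)
  else 0

/-- `π(t) = π̂(t)` for `t ≤ T` and `π(t) = π̂(T)` for `t > T`. -/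
def expPi {n : ℕ} (r a : ℕ) (q : ℝ) (ω : Sym2 (Fin n) → Bool) (t : ℕ) : ℝ :=
  if t ≤ expT r a ω then binomTail r t q else binomTail r (expT r a ω) q

/-- The martingale value `M(t,i)`. -/
def expM {n : ℕ} (r a : ℕ) (q : ℝ) (t i : ℕ) (ω : Sym2 (Fin n) → Bool) : ℝ :=
  (∑ j ∈ Finset.Icc 1 i, (expX r a ω t j - expPi r a q ω t) / (1 - expPi r a q ω t)) +
  ∑ j ∈ Finset.Icc (i + 1) (n - a),
    (expX r a ω (t - 1) j - expPi r a q ω (t - 1)) / (1 - expPi r a q ω (t - 1))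

/-- The rounds `(0,n-a), (1,1), …, (n,n-a)` listed linearly: round `0` is `(0,n-a)` and
round `k ≥ 1` is `(⌈k/(n-a)⌉, ((k-1) mod (n-a)) + 1)`. -/
def expMseq (n r a : ℕ) (q : ℝ) (k : ℕ) (ω : Sym2 (Fin n) → Bool) : ℝ :=
  if k = 0 then expM r a q 0 (n - a) ω
  else expM r a q ((k - 1) / (n - a) + 1) ((k - 1) % (n - a) + 1) ω

/-!
The increment of `M` in round `(t+1,i)` only involves vertex `v = a+i`. Delete all edges at `v`.
As long as `v` has fewer than `r` neighbours in `Z(t)`, the exploration up to time `t+1` does not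
notice, so neither do the earlier values of `M` nor the events of `F` before the round; and the
increment is a function of the isolated graph, of the number `C` of neighbours of `v` in `Z(t)`
and of the edge from `v` to the vertex examined at time `t+1`. Given the isolated graph, `C` and
that edge are independent `Bin(t,q)` and `Bernoulli(q)` variables, and by Pascal's rule
`π̂(t+1) = P[Bin(t,q) + Bernoulli(q) ≥ r]` the normalisation by `1 - π` makes the conditional
mean of the increment vanish. Once `v` has `r` neighbours in `Z(t)`, or once `t ≥ T`, the
increment is zero.
-/

section Binomial

variable {q : ℝ}

def binomWeight (q : ℝ) (m c : ℕ) : ℝ :=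
  (m.choose c : ℝ) * q ^ c * (1 - q) ^ (m - c)

lemma binomWeight_succ_succ (m c : ℕ) :
    binomWeight q (m + 1) (c + 1) = q * binomWeight q m c + (1 - q) * binomWeight q m (c + 1) := by
  rcases lt_or_ge m (c + 1) with h | h
  · simp only [binomWeight, Nat.choose_succ_succ', Nat.choose_eq_zero_of_lt h,
      Nat.add_sub_add_right, show m - c = 0 by omega]
    push_cast
    ring
  · obtain ⟨d, rfl⟩ := Nat.exists_eq_add_of_le h
    simp only [binomWeight, Nat.choose_succ_succ', Nat.add_sub_add_right,
      show c + 1 + d - c = d + 1 by omega, show c + 1 + d - (c + 1) = d by omega]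
    push_cast
    ring

lemma sum_binomWeight (m : ℕ) : ∑ c ∈ range (m + 1), binomWeight q m c = 1 := by
  have h := (add_pow q (1 - q) m).symm
  rw [add_sub_cancel, one_pow] at h
  rw [← h]
  exact sum_congr rfl fun c _ => by rw [binomWeight]; ring

/-- Pascal's rule in distributional form: `Bin(m+1, q)` is `Bin(m, q)` plus an independent
`Bernoulli(q)`. -/
lemma sum_binomWeight_succ_mul (m : ℕ) (g : ℕ → ℝ) :
    ∑ c ∈ range (m + 2), binomWeight q (m + 1) c * g c
      = ∑ c ∈ range (m + 1), binomWeight q m c * (q * g (c + 1) + (1 - q) * g c) := by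
  have hlast : binomWeight q m (m + 1) = 0 := by simp [binomWeight]
  have hzero : binomWeight q (m + 1) 0 = (1 - q) * binomWeight q m 0 := by
    simp [binomWeight, pow_succ, mul_comm]
  have hshift := sum_range_succ' (fun c => binomWeight q m c * g c) m
  have htop := sum_range_succ (fun c => binomWeight q m (c + 1) * g (c + 1)) m
  rw [sum_range_succ', hzero]
  simp only [binomWeight_succ_succ, add_mul, mul_add, sum_add_distrib, hlast, zero_mul,
    add_zero] at htop ⊢
  simp only [mul_assoc, mul_left_comm _ q, mul_left_comm _ (1 - q), ← mul_sum, htop, hshift]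
  ring

lemma binomTail_eq_sum (r m : ℕ) :
    binomTail r m q = ∑ c ∈ range (m + 1), binomWeight q m c * (if r ≤ c then 1 else 0) := by
  rw [binomTail]
  simp only [mul_boole, ← sum_filter]
  refine sum_congr ?_ fun c _ => rfl
  ext c
  simp only [mem_Icc, mem_filter, mem_range]
  omega

lemma binomTail_lt_one (hq0 : 0 ≤ q) (hq1 : q < 1) {r : ℕ} (hr : 1 ≤ r) (m : ℕ) :
    binomTail r m q < 1 := by
  have h1q : 0 < 1 - q := by linarith
  have hpos : 0 < ∑ c ∈ range (m + 1), binomWeight q m c * (1 - if r ≤ c then 1 else 0) := by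
    refine sum_pos' (fun c _ => ?_) ⟨0, by simp, ?_⟩
    · unfold binomWeight
      split_ifs <;> positivity
    · simp only [binomWeight, Nat.choose_zero_right, pow_zero, Nat.sub_zero,
        if_neg (show ¬ r ≤ 0 by omega)]
      positivity
  simp only [mul_sub, mul_one, sum_sub_distrib, sum_binomWeight, ← binomTail_eq_sum] at hpos
  linarith

end Binomial

/-- The increment `M(t+1,i) - M(t+1,i-1)` on the event that vertex `a+i` has fewer than `r`
neighbours in `Z(t)` (so `X(t,i) = 0`) and `c` neighbours in `Z(t+1)`, while `t < T`. -/
def roundIncrement (r t : ℕ) (q : ℝ) (c : ℕ) : ℝ :=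
  ((if r ≤ c then 1 else 0) - binomTail r (t + 1) q) / (1 - binomTail r (t + 1) q)
    - (0 - binomTail r t q) / (1 - binomTail r t q)

lemma sum_binomWeight_mul_roundIncrement {q : ℝ} (hq0 : 0 ≤ q) (hq1 : q < 1) {r : ℕ}
    (hr : 1 ≤ r) (t : ℕ) :
    ∑ c ∈ range (t + 1), binomWeight q t c *
      (q * (if c < r then roundIncrement r t q (c + 1) else 0)
        + (1 - q) * (if c < r then roundIncrement r t q c else 0)) = 0 := by
  have h₀ := sub_ne_zero.2 (binomTail_lt_one hq0 hq1 hr t).ne'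
  have h₁ := sub_ne_zero.2 (binomTail_lt_one hq0 hq1 hr (t + 1)).ne'
  let ind : ℕ → ℝ := fun c => if r ≤ c then 1 else 0
  have hterm : ∀ c, binomWeight q t c *
      (q * (if c < r then roundIncrement r t q (c + 1) else 0)
        + (1 - q) * (if c < r then roundIncrement r t q c else 0))
      = (binomWeight q t c * (q * ind (c + 1) + (1 - q) * ind c)) / (1 - binomTail r (t + 1) q)
        - binomWeight q t c * ind c / (1 - binomTail r (t + 1) q)
        + (binomWeight q t c - binomWeight q t c * ind c)
          * (binomTail r t q / (1 - binomTail r t q)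
            - binomTail r (t + 1) q / (1 - binomTail r (t + 1) q)) := by
    intro c
    simp only [roundIncrement, ind]
    by_cases hc : c < r
    · simp only [if_pos hc, if_neg (show ¬ r ≤ c by omega)]
      field_simp
      ring
    · simp only [if_neg hc, if_pos (show r ≤ c by omega), if_pos (show r ≤ c + 1 by omega)]
      field_simp
      ring
  have hπ₁ := binomTail_eq_sum (q := q) r (t + 1)
  rw [sum_binomWeight_succ_mul] at hπ₁
  simp only [hterm, sum_add_distrib, sum_sub_distrib, ← sum_div, ← sum_mul, ← hπ₁, ind,
    ← binomTail_eq_sum, sum_binomWeight]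
  field_simp
  ring

section BooleanCube

variable {κ : Type*} [Fintype κ] {q : ℝ}

def bernWeight (q : ℝ) (b : Bool) : ℝ := if b then q else 1 - q

def cubeWeight (q : ℝ) (η : κ → Bool) : ℝ := ∏ j, bernWeight q (η j)

lemma sum_cubeWeight [DecidableEq κ] : ∑ η : κ → Bool, cubeWeight q η = 1 := by
  simp only [cubeWeight]
  rw [← Fintype.prod_sum fun _ b => bernWeight q b]
  simp [bernWeight]

lemma sum_cubeWeight_mul_apply [DecidableEq κ] (e : κ) (g : Bool → ℝ) :
    ∑ η : κ → Bool, cubeWeight q η * g (η e) = q * g true + (1 - q) * g false := by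
  have hprod : ∀ η : κ → Bool, cubeWeight q η * g (η e)
      = ∏ j, bernWeight q (η j) * (if j = e then g (η j) else 1) := fun η => by
    rw [prod_mul_distrib, prod_ite_eq' univ e, if_pos (mem_univ e), cubeWeight]
  have hfactor : ∀ j, ∑ b, bernWeight q b * (if j = e then g b else 1)
      = if j = e then q * g true + (1 - q) * g false else 1 := fun j => by
    split_ifs <;> simp [bernWeight]
  rw [sum_congr rfl fun η _ => hprod η,
    ← Fintype.prod_sum fun j b => bernWeight q b * (if j = e then g b else 1),
    prod_congr rfl fun j _ => hfactor j, prod_ite_eq' univ e, if_pos (mem_univ e)]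

lemma cubeWeight_piEquivPiSubtypeProd_symm (p : κ → Prop) [DecidablePred p]
    (η₁ : {j // p j} → Bool) (η₂ : {j // ¬ p j} → Bool) :
    cubeWeight q ((Equiv.piEquivPiSubtypeProd p fun _ => Bool).symm (η₁, η₂))
      = cubeWeight q η₁ * cubeWeight q η₂ := by
  rw [cubeWeight, ← Fintype.prod_subtype_mul_prod_subtype p]
  congr 1 <;> exact prod_congr rfl fun j _ => by simp [j.2]

lemma sum_cubeWeight_mul_card [DecidableEq κ] (g : ℕ → ℝ) :
    ∑ η : κ → Bool, cubeWeight q η * g #{j | η j}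
      = ∑ c ∈ range (Fintype.card κ + 1), binomWeight q (Fintype.card κ) c * g c := by
  have hbij : Function.Bijective fun (S : Finset κ) (j : κ) => decide (j ∈ S) := by
    refine ⟨fun S S' h => ?_, fun η => ⟨univ.filter (η ·), by ext j; simp⟩⟩
    ext j
    simpa using congrFun h j
  rw [← Fintype.sum_bijective _ hbij (fun S => q ^ #S * (1 - q) ^ (Fintype.card κ - #S) * g #S)]
  · rw [← powerset_univ,
      sum_powerset_apply_card fun m => q ^ m * (1 - q) ^ (Fintype.card κ - m) * g m, card_univ]
    exact sum_congr rfl fun c _ => by simp [binomWeight, mul_assoc]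
  · intro S
    have hcompl : #{j | j ∉ S} = Fintype.card κ - #S := by
      rw [← card_compl]; congr 1; ext; simp
    simp [cubeWeight, bernWeight, prod_ite, hcompl]

lemma sum_cubeWeight_mul_card_insert [DecidableEq κ] {S : Finset κ} {e : κ} (he : e ∉ S)
    (f : ℕ → ℕ → ℝ) :
    ∑ η : κ → Bool, cubeWeight q η * f #{j ∈ S | η j} #{j ∈ insert e S | η j}
      = ∑ c ∈ range (#S + 1), binomWeight q #S c * (q * f c (c + 1) + (1 - q) * f c c) := by
  let E := Equiv.piEquivPiSubtypeProd (· ∈ S) fun _ => Bool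
  have hcard : ∀ η₁ η₂, #{j ∈ S | E.symm (η₁, η₂) j} = #{j | η₁ j} := fun η₁ η₂ => by
    rw [card_filter, card_filter, ← sum_coe_sort S]
    exact sum_congr rfl fun j _ => by simp [E, j.2]
  have hinsert : ∀ η : κ → Bool,
      #{j ∈ insert e S | η j} = #{j ∈ S | η j} + if η e then 1 else 0 := fun η => by
    rw [filter_insert]
    split_ifs <;> simp [card_insert_of_notMem, he]
  have hE : ∀ η₁ η₂, E.symm (η₁, η₂) e = η₂ ⟨e, he⟩ := fun η₁ η₂ => by simp [E, he]
  calc _ = ∑ η₁ : {j // j ∈ S} → Bool, cubeWeight q η₁ *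
          ∑ η₂ : {j // j ∉ S} → Bool, cubeWeight q η₂ *
            f #{j | η₁ j} (#{j | η₁ j} + if η₂ ⟨e, he⟩ then 1 else 0) := by
        rw [← E.symm.sum_comp, Fintype.sum_prod_type]
        refine sum_congr rfl fun η₁ _ => ?_
        rw [mul_sum]
        refine sum_congr rfl fun η₂ _ => ?_
        rw [cubeWeight_piEquivPiSubtypeProd_symm, hinsert, hcard, hE, mul_assoc]
        congr 2
        exact Subsingleton.elim _ _
    _ = ∑ η₁ : {j // j ∈ S} → Bool, cubeWeight q η₁ *
          (q * f #{j | η₁ j} (#{j | η₁ j} + 1) + (1 - q) * f #{j | η₁ j} #{j | η₁ j}) := by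
        refine sum_congr rfl fun η₁ _ => ?_
        rw [sum_cubeWeight_mul_apply (⟨e, he⟩ : {j // j ∉ S})
          fun b => f #{j | η₁ j} (#{j | η₁ j} + if b then 1 else 0)]
        simp
    _ = _ := by
        rw [sum_cubeWeight_mul_card fun c => q * f c (c + 1) + (1 - q) * f c c, Fintype.card_coe]

end BooleanCube

section Measure

variable {q : ℝ}

instance (n : ℕ) (q : ℝ) : IsProbabilityMeasure (gnp n q) := by
  unfold gnp
  infer_instance

lemma bernoulliMeasure_real_singleton (hq0 : 0 ≤ q) (hq1 : q ≤ 1) (b : Bool) :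
    (bernoulliMeasure q).real {b} = bernWeight q b := by
  have hq : min q.toNNReal 1 = q.toNNReal := min_eq_left (Real.toNNReal_le_one.2 hq1)
  rw [measureReal_def, bernoulliMeasure,
    PMF.toMeasure_apply_singleton _ _ (measurableSet_singleton _)]
  erw [PMF.ofFintype_apply]
  rw [hq]
  cases b
  · simp [bernWeight, Real.toNNReal_le_one.2 hq1, hq0]
  · simp [bernWeight, hq0]

lemma integral_pi_bernoulliMeasure {ι : Type*} [Fintype ι] [DecidableEq ι] (hq0 : 0 ≤ q)
    (hq1 : q ≤ 1) (f : (ι → Bool) → ℝ) :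
    ∫ ω, f ω ∂(Measure.pi fun _ => bernoulliMeasure q) = ∑ ω, cubeWeight q ω * f ω := by
  rw [integral_fintype .of_finite]
  refine sum_congr rfl fun ω _ => ?_
  rw [smul_eq_mul, measureReal_def, ← Set.univ_pi_singleton, Measure.pi_pi, ENNReal.toReal_prod]
  simp only [← measureReal_def, bernoulliMeasure_real_singleton hq0 hq1, cubeWeight]

end Measure

lemma Nat.min_sInf_eq_min_sInf {S S' : Set ℕ} (hS : S.Nonempty) (hS' : S'.Nonempty) {t : ℕ}
    (h : ∀ s < t, s ∈ S ↔ s ∈ S') : min (sInf S) t = min (sInf S') t := by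
  have key : ∀ {S S' : Set ℕ}, S.Nonempty → (∀ s < t, s ∈ S ↔ s ∈ S') → sInf S < t →
      sInf S' ≤ sInf S := fun hS h hlt => Nat.sInf_le ((h _ hlt).1 (Nat.sInf_mem hS))
  have h' : ∀ s < t, s ∈ S' ↔ s ∈ S := fun s hs => (h s hs).symm
  rcases lt_or_ge (sInf S) t with h1 | h1 <;> rcases lt_or_ge (sInf S') t with h2 | h2
  · have := key hS h h1; have := key hS' h' h2; omega
  · have := key hS h h1; omega
  · have := key hS' h' h2; omega
  · omega

lemma MeasurableSpace.mem_iff_of_measurableSet_biSup_comap {ι α β : Type*}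
    [mβ : MeasurableSpace β] {f : ι → α → β} {I : Set ι} {φ : α → α} {P : α → Prop}
    (h : ∀ i ∈ I, ∀ x, P x → f i (φ x) = f i x) {s : Set α}
    (hs : MeasurableSet[⨆ i ∈ I, mβ.comap (f i)] s) {x : α} (hx : P x) : φ x ∈ s ↔ x ∈ s := by
  let invariant : MeasurableSpace α :=
    { MeasurableSet' := fun u => ∀ x, P x → (φ x ∈ u ↔ x ∈ u)
      measurableSet_empty := by simp
      measurableSet_compl := fun u hu x hx => not_congr (hu x hx)
      measurableSet_iUnion := fun u hu x hx => by
        simp only [Set.mem_iUnion]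
        exact exists_congr fun i => hu i x hx }
  have hle : ⨆ i ∈ I, mβ.comap (f i) ≤ invariant := by
    refine iSup₂_le fun i hi => ?_
    rintro _ ⟨B, -, rfl⟩ x hx
    simp only [Set.mem_preimage, h i hi x hx]
  exact hle s hs x hx

section Exploration

variable {n r a : ℕ} {ω : Sym2 (Fin n) → Bool}

lemma nbrCount_mono {S S' : Finset (Fin n)} (h : S ⊆ S') (v : Fin n) :
    nbrCount ω S v ≤ nbrCount ω S' v :=
  card_le_card (filter_subset_filter _ h)

lemma expZ_succ (t : ℕ) :
    expZ r a ω (t + 1) = if h : (expA r a ω t \ expZ r a ω t).Nonempty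
      then insert ((expA r a ω t \ expZ r a ω t).min' h) (expZ r a ω t) else expZ r a ω t :=
  rfl

lemma expZ_succ_of_eq {t : ℕ} (h : expA r a ω t = expZ r a ω t) :
    expZ r a ω (t + 1) = expZ r a ω t := by
  simp [expZ_succ, h]

lemma expZ_mono : Monotone (expZ r a ω) := by
  refine monotone_nat_of_le_succ fun t => ?_
  rw [expZ_succ]
  split_ifs
  exacts [subset_insert _ _, subset_rfl]

lemma expA_mono : Monotone (expA r a ω) := fun _ _ hst =>
  union_subset_union subset_rfl <| monotone_filter_right _ fun v _ hv =>
    ⟨hv.1, hv.2.trans (nbrCount_mono (expZ_mono hst) v)⟩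

lemma expZ_subset_expA (t : ℕ) : expZ r a ω t ⊆ expA r a ω t := by
  induction t with
  | zero => simp [expZ]
  | succ t ih =>
    have hA := expA_mono (r := r) (a := a) (ω := ω) t.le_succ
    rw [expZ_succ]
    split_ifs with h
    · exact insert_subset (hA (mem_sdiff.1 (min'_mem _ h)).1) (ih.trans hA)
    · exact ih.trans hA

lemma expZ_succ_of_ne {t : ℕ} (h : expA r a ω t ≠ expZ r a ω t) :
    ∃ u ∈ expA r a ω t, u ∉ expZ r a ω t ∧ expZ r a ω (t + 1) = insert u (expZ r a ω t) := by
  have hne : (expA r a ω t \ expZ r a ω t).Nonempty :=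
    sdiff_nonempty.2 fun hsub => h (hsub.antisymm (expZ_subset_expA t))
  exact ⟨_, (mem_sdiff.1 (min'_mem _ hne)).1, (mem_sdiff.1 (min'_mem _ hne)).2,
    by rw [expZ_succ, dif_pos hne]⟩

lemma card_expZ_of_forall_ne {t : ℕ} (h : ∀ s < t, expA r a ω s ≠ expZ r a ω s) :
    #(expZ r a ω t) = t := by
  induction t with
  | zero => rfl
  | succ t ih =>
    obtain ⟨u, -, hu, hZ⟩ := expZ_succ_of_ne (h t t.lt_succ_self)
    rw [hZ, card_insert_of_notMem hu, ih fun s hs => h s (hs.trans t.lt_succ_self)]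

lemma exists_expA_eq_expZ : ∃ t, expA r a ω t = expZ r a ω t := by
  by_contra! h
  have := card_le_univ (expZ r a ω (n + 1))
  rw [card_expZ_of_forall_ne fun s _ => h s, Fintype.card_fin] at this
  omega

lemma le_expT_iff {t : ℕ} : t ≤ expT r a ω ↔ ∀ s < t, expA r a ω s ≠ expZ r a ω s :=
  ⟨fun h _ hs => Nat.notMem_of_lt_sInf (hs.trans_le h),
    fun h => not_lt.1 fun hlt => h _ hlt (Nat.sInf_mem exists_expA_eq_expZ)⟩

lemma card_expZ {t : ℕ} (h : t ≤ expT r a ω) : #(expZ r a ω t) = t :=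
  card_expZ_of_forall_ne (le_expT_iff.1 h)

lemma expA_eq_expZ_of_expT_le {t : ℕ} (h : expT r a ω ≤ t) : expA r a ω t = expZ r a ω t := by
  induction t, h using Nat.le_induction with
  | base => exact Nat.sInf_mem exists_expA_eq_expZ
  | succ t _ ih =>
    have hZ := expZ_succ_of_eq ih
    unfold expA at ih ⊢
    rwa [hZ]

lemma expPi_eq_binomTail_min (q : ℝ) (t : ℕ) :
    expPi r a q ω t = binomTail r (min t (expT r a ω)) q := by
  unfold expPi
  split_ifs with h
  · rw [min_eq_left h]
  · rw [min_eq_right (not_le.1 h).le]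

end Exploration

section Isolation

variable {n r a : ℕ} {ω : Sym2 (Fin n) → Bool} {v : Fin n} {t : ℕ}

def isolate (v : Fin n) (ω : Sym2 (Fin n) → Bool) : Sym2 (Fin n) → Bool :=
  fun e => if v ∈ e then false else ω e

lemma nbrCount_isolate_self (S : Finset (Fin n)) : nbrCount (isolate v ω) S v = 0 := by
  simp [nbrCount, isolate]

lemma nbrCount_isolate_of_ne {S : Finset (Fin n)} (hS : v ∉ S) {w : Fin n} (hw : w ≠ v) :
    nbrCount (isolate v ω) S w = nbrCount ω S w := by
  refine congrArg card (filter_congr fun u hu => ?_)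
  have hv : v ∉ s(u, w) := by
    rw [Sym2.mem_iff, not_or]
    exact ⟨fun h => hS (h ▸ hu), fun h => hw h.symm⟩
  simp [isolate, hv]

lemma notMem_expA_isolate (hr : 1 ≤ r) (hv : a ≤ v.val) (t : ℕ) :
    v ∉ expA r a (isolate v ω) t := by
  simp [expA, initSet, nbrCount_isolate_self, hv, not_lt.2 hv]
  omega

lemma notMem_expZ_isolate (hr : 1 ≤ r) (hv : a ≤ v.val) (t : ℕ) :
    v ∉ expZ r a (isolate v ω) t :=
  fun h => notMem_expA_isolate hr hv t (expZ_subset_expA t h)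

lemma expA_eq_expA_isolate (hr : 1 ≤ r) (hv : a ≤ v.val)
    (hZ : expZ r a ω t = expZ r a (isolate v ω) t) (hc : nbrCount ω (expZ r a ω t) v < r) :
    expA r a ω t = expA r a (isolate v ω) t := by
  rw [expA, expA, ← hZ]
  refine congrArg _ (filter_congr fun w _ => ?_)
  by_cases hw : w = v
  · subst hw
    simp only [nbrCount_isolate_self]
    omega
  · rw [hZ, nbrCount_isolate_of_ne (notMem_expZ_isolate hr hv t) hw]

/-- The premise on `s` is only needed while the two explorations still agree, so the neighbours
of `v` may be counted in either of them. -/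
lemma expZ_eq_expZ_isolate (hr : 1 ≤ r) (hv : a ≤ v.val)
    (h : ∀ s < t, expZ r a ω s = expZ r a (isolate v ω) s → nbrCount ω (expZ r a ω s) v < r) :
    expZ r a ω t = expZ r a (isolate v ω) t := by
  induction t with
  | zero => rfl
  | succ t ih =>
    have hZ := ih fun s hs => h s (hs.trans t.lt_succ_self)
    rw [expZ_succ, expZ_succ, expA_eq_expA_isolate hr hv hZ (h t t.lt_succ_self hZ), hZ]

lemma expZ_eq_expZ_isolate_of_le (hr : 1 ≤ r) (hv : a ≤ v.val)
    (hc : nbrCount ω (expZ r a (isolate v ω) t) v < r) {s : ℕ} (hs : s ≤ t + 1) :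
    expZ r a ω s = expZ r a (isolate v ω) s :=
  expZ_eq_expZ_isolate hr hv fun s' hs' hZ => hZ ▸
    (nbrCount_mono (expZ_mono (by omega)) v).trans_lt hc

lemma expA_eq_expA_isolate_of_le (hr : 1 ≤ r) (hv : a ≤ v.val)
    (hc : nbrCount ω (expZ r a (isolate v ω) t) v < r) {s : ℕ} (hs : s ≤ t) :
    expA r a ω s = expA r a (isolate v ω) s := by
  have hZ := expZ_eq_expZ_isolate_of_le hr hv hc (s := s) (by omega)
  exact expA_eq_expA_isolate hr hv hZ (hZ ▸ (nbrCount_mono (expZ_mono hs) v).trans_lt hc)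

lemma min_expT_eq_min_expT_isolate (hr : 1 ≤ r) (hv : a ≤ v.val)
    (hc : nbrCount ω (expZ r a (isolate v ω) t) v < r) :
    min (expT r a ω) (t + 1) = min (expT r a (isolate v ω)) (t + 1) := by
  refine Nat.min_sInf_eq_min_sInf (S := {s | expA r a ω s = expZ r a ω s})
    (S' := {s | expA r a (isolate v ω) s = expZ r a (isolate v ω) s})
    exists_expA_eq_expZ exists_expA_eq_expZ fun s hs => ?_
  change expA r a ω s = expZ r a ω s ↔ _
  rw [expA_eq_expA_isolate_of_le hr hv hc (Nat.le_of_lt_succ hs),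
    expZ_eq_expZ_isolate_of_le hr hv hc (s := s) (by omega)]
  rfl

lemma expPi_eq_expPi_isolate (hr : 1 ≤ r) (hv : a ≤ v.val)
    (hc : nbrCount ω (expZ r a (isolate v ω) t) v < r) (q : ℝ) {s : ℕ} (hs : s ≤ t + 1) :
    expPi r a q ω s = expPi r a q (isolate v ω) s := by
  have h := min_expT_eq_min_expT_isolate hr hv hc
  rw [expPi_eq_binomTail_min, expPi_eq_binomTail_min]
  congr 1
  omega

lemma nbrCount_expZ_isolate_lt (hr : 1 ≤ r) (hv : a ≤ v.val)
    (hc : nbrCount ω (expZ r a ω t) v < r) : nbrCount ω (expZ r a (isolate v ω) t) v < r := by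
  rwa [← expZ_eq_expZ_isolate hr hv fun s hs _ =>
    (nbrCount_mono (expZ_mono hs.le) v).trans_lt hc]

end Isolation

section Increments

variable {n r a : ℕ} {q : ℝ} {ω : Sym2 (Fin n) → Bool} {v : Fin n}

def expY (r a : ℕ) (q : ℝ) (t j : ℕ) (ω : Sym2 (Fin n) → Bool) : ℝ :=
  (expX r a ω t j - expPi r a q ω t) / (1 - expPi r a q ω t)

lemma expM_eq_sum_expY (t i : ℕ) (ω : Sym2 (Fin n) → Bool) :
    expM r a q t i ω
      = ∑ j ∈ Icc 1 i, expY r a q t j ω + ∑ j ∈ Icc (i + 1) (n - a), expY r a q (t - 1) j ω :=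
  rfl

lemma expM_succ_zero (t : ℕ) (ω : Sym2 (Fin n) → Bool) :
    expM r a q (t + 1) 0 ω = expM r a q t (n - a) ω := by
  simp [expM_eq_sum_expY]

lemma expM_succ_sub_expM {i : ℕ} (hi : i < n - a) (t : ℕ) (ω : Sym2 (Fin n) → Bool) :
    expM r a q t (i + 1) ω - expM r a q t i ω
      = expY r a q t (i + 1) ω - expY r a q (t - 1) (i + 1) ω := by
  rw [expM_eq_sum_expY, expM_eq_sum_expY, sum_Icc_succ_top (by omega),
    Icc_eq_cons_Ioc (show i + 1 ≤ n - a by omega), sum_cons, ← Icc_add_one_left_eq_Ioc]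
  ring

lemma expMseq_succ (m : ℕ) (ω : Sym2 (Fin n) → Bool) :
    expMseq n r a q (m + 1) ω = expM r a q (m / (n - a) + 1) (m % (n - a) + 1) ω := by
  simp [expMseq]

lemma expMseq_eq (hN : 0 < n - a) (m : ℕ) (ω : Sym2 (Fin n) → Bool) :
    expMseq n r a q m ω = expM r a q (m / (n - a) + 1) (m % (n - a)) ω := by
  rcases m with _ | m
  · simp [expMseq, expM_succ_zero]
  have h := Nat.div_add_mod m (n - a)
  have hlt := Nat.mod_lt m hN
  rw [expMseq_succ]
  by_cases hm : m % (n - a) + 1 = n - a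
  · obtain ⟨h1, h2⟩ := (Nat.div_mod_unique hN).2
      (show 0 + (n - a) * (m / (n - a) + 1) = m + 1 ∧ 0 < n - a from
        ⟨by rw [Nat.mul_succ]; omega, hN⟩)
    rw [h1, h2, expM_succ_zero, hm]
  · obtain ⟨h1, h2⟩ := (Nat.div_mod_unique hN).2
      (show m % (n - a) + 1 + (n - a) * (m / (n - a)) = m + 1 ∧ m % (n - a) + 1 < n - a by
        omega)
    rw [h1, h2]

lemma expX_eq {j : ℕ} (hj : 1 ≤ j) {w : Fin n} (hw : a + j = w.val + 1) (t : ℕ) :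
    expX r a ω t j = if r ≤ nbrCount ω (expZ r a ω t) w then 1 else 0 := by
  rw [expX, dif_pos ⟨hj, by omega⟩]
  congr 3
  exact Fin.ext (by simp; omega)

lemma expY_eq_expY_isolate (hr : 1 ≤ r) (hv : a ≤ v.val) {t : ℕ}
    (hc : nbrCount ω (expZ r a (isolate v ω) t) v < r) {s j : ℕ} (hs : s ≤ t + 1)
    (hj : j ∈ Icc 1 (n - a)) (hjv : a + j = v.val + 1 → s ≤ t) :
    expY r a q s j ω = expY r a q s j (isolate v ω) := by
  rw [mem_Icc] at hj
  have hw : a + j = (⟨a + j - 1, by omega⟩ : Fin n).val + 1 := by simp; omega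
  rw [expY, expY, expPi_eq_expPi_isolate hr hv hc q hs, expX_eq hj.1 hw, expX_eq hj.1 hw,
    expZ_eq_expZ_isolate_of_le hr hv hc hs]
  by_cases hwv : (⟨a + j - 1, by omega⟩ : Fin n) = v
  · have hst : s ≤ t := hjv (hwv ▸ hw)
    rw [hwv, nbrCount_isolate_self,
      if_neg (not_le.2 ((nbrCount_mono (expZ_mono hst) v).trans_lt hc)), if_neg (by omega)]
  · rw [nbrCount_isolate_of_ne (notMem_expZ_isolate hr hv s) hwv]

lemma expM_eq_expM_isolate (hr : 1 ≤ r) (hv : a ≤ v.val) {t : ℕ}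
    (hc : nbrCount ω (expZ r a (isolate v ω) t) v < r) {t' i : ℕ} (ht' : t' ≤ t + 1)
    (hi : i ≤ n - a) (hti : t' = t + 1 → a + i ≤ v.val) :
    expM r a q t' i ω = expM r a q t' i (isolate v ω) := by
  rw [expM_eq_sum_expY, expM_eq_sum_expY]
  congr 1 <;> refine sum_congr rfl fun j hj => ?_ <;> rw [mem_Icc] at hj
  · refine expY_eq_expY_isolate hr hv hc ht' (mem_Icc.2 ⟨hj.1, by omega⟩) fun hjv => ?_
    by_contra h
    have := hti (by omega)
    omega
  · exact expY_eq_expY_isolate hr hv hc (by omega) (mem_Icc.2 ⟨by omega, hj.2⟩) fun _ => by omega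

lemma expMseq_eq_expMseq_isolate (hN : 0 < n - a) (hr : 1 ≤ r) {m : ℕ}
    (hv : v.val = a + m % (n - a)) (hc : nbrCount ω (expZ r a (isolate v ω) (m / (n - a))) v < r)
    {j : ℕ} (hj : j ≤ m) :
    expMseq n r a q j ω = expMseq n r a q j (isolate v ω) := by
  rw [expMseq_eq hN, expMseq_eq hN]
  refine expM_eq_expM_isolate hr (by omega) hc (Nat.succ_le_succ (Nat.div_le_div_right hj))
    (Nat.mod_lt _ hN).le fun h => ?_
  have hj' := Nat.div_add_mod j (n - a)
  have hm := Nat.div_add_mod m (n - a)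
  rw [show j / (n - a) = m / (n - a) by omega] at hj'
  omega

lemma expY_eq_one (hq0 : 0 ≤ q) (hq1 : q < 1) (hr : 1 ≤ r) {j : ℕ} (hj : 1 ≤ j)
    (hv : a + j = v.val + 1) {t : ℕ} (hc : r ≤ nbrCount ω (expZ r a ω t) v) :
    expY r a q t j ω = 1 := by
  have hπ : 1 - expPi r a q ω t ≠ 0 := by
    rw [expPi_eq_binomTail_min]
    exact sub_ne_zero.2 (binomTail_lt_one hq0 hq1 hr _).ne'
  rw [expY, expX_eq hj hv, if_pos hc, div_self hπ]

lemma expY_succ_of_expT_le {j : ℕ} {t : ℕ} (hT : expT r a ω ≤ t) :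
    expY r a q (t + 1) j ω = expY r a q t j ω := by
  have hZ := expZ_succ_of_eq (expA_eq_expZ_of_expT_le hT)
  have hπ : expPi r a q ω (t + 1) = expPi r a q ω t := by
    rw [expPi_eq_binomTail_min, expPi_eq_binomTail_min, min_eq_right hT,
      min_eq_right (hT.trans t.le_succ)]
  unfold expY expX
  rw [hZ, hπ]

lemma expY_succ_sub_expY (hq0 : 0 ≤ q) (hq1 : q < 1) (hr : 1 ≤ r) {j : ℕ} (hj : 1 ≤ j)
    (hv : a + j = v.val + 1) (t : ℕ) (ω : Sym2 (Fin n) → Bool) :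
    expY r a q (t + 1) j ω - expY r a q t j ω =
      if t + 1 ≤ expT r a (isolate v ω) then
        if nbrCount ω (expZ r a (isolate v ω) t) v < r then
          roundIncrement r t q (nbrCount ω (expZ r a (isolate v ω) (t + 1)) v)
        else 0
      else 0 := by
  have hva : a ≤ v.val := by omega
  by_cases hc : nbrCount ω (expZ r a (isolate v ω) t) v < r
  · have hT := min_expT_eq_min_expT_isolate hr hva hc
    by_cases hTt : t + 1 ≤ expT r a (isolate v ω)
    · have hTω : t + 1 ≤ expT r a ω := by omega
      rw [if_pos hTt, if_pos hc, expY, expY, expX_eq hj hv, expX_eq hj hv,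
        expZ_eq_expZ_isolate_of_le hr hva hc le_rfl,
        expZ_eq_expZ_isolate_of_le hr hva hc t.le_succ, if_neg (not_le.2 hc), expPi, expPi,
        if_pos hTω, if_pos (t.le_succ.trans hTω), roundIncrement]
    · rw [if_neg hTt, expY_succ_of_expT_le (by omega), sub_self]
  · have hcω : r ≤ nbrCount ω (expZ r a ω t) v :=
      not_lt.1 fun h => hc (nbrCount_expZ_isolate_lt hr hva h)
    rw [expY_eq_one hq0 hq1 hr hj hv hcω,
      expY_eq_one hq0 hq1 hr hj hv (hcω.trans (nbrCount_mono (expZ_mono t.le_succ) v)),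
      sub_self, if_neg hc, ite_self]

end Increments

section Conditioning

variable {n : ℕ} {q : ℝ}

def incidentEdge (v u : Fin n) : {e : Sym2 (Fin n) // v ∈ e} := ⟨s(u, v), Sym2.mem_mk_right u v⟩

lemma incidentEdge_injective (v : Fin n) : Function.Injective (incidentEdge v) := by
  intro u u' h
  have := congrArg Subtype.val h
  simp only [incidentEdge, Sym2.eq_iff] at this
  rcases this with ⟨h, -⟩ | ⟨h, h'⟩
  exacts [h, h.trans h']

lemma nbrCount_eq_card_filter_image (ω : Sym2 (Fin n) → Bool) {S : Finset (Fin n)} {v : Fin n}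
    (hS : v ∉ S) : nbrCount ω S v = #{e ∈ S.image (incidentEdge v) | ω e.1} := by
  rw [nbrCount, filter_image, card_image_of_injective _ (incidentEdge_injective v)]
  refine congrArg card (filter_congr fun u hu => ?_)
  simp [incidentEdge, show u ≠ v from fun h => hS (h ▸ hu)]

/-- The isolated graph is independent of the edges at `v`. -/
lemma sum_cubeWeight_mul_isolate (v : Fin n)
    (F : (Sym2 (Fin n) → Bool) → ({e : Sym2 (Fin n) // v ∈ e} → Bool) → ℝ) :
    ∑ ω, cubeWeight q ω * F (isolate v ω) (fun e => ω e)
      = ∑ ω, cubeWeight q ω * ∑ η, cubeWeight q η * F (isolate v ω) η := by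
  let E := Equiv.piEquivPiSubtypeProd (fun e : Sym2 (Fin n) => v ∈ e) fun _ => Bool
  have hiso : ∀ η ρ, isolate v (E.symm (η, ρ)) = E.symm (fun _ => false, ρ) := fun η ρ => by
    funext e
    by_cases he : v ∈ e <;> simp [E, isolate, he]
  have hres : ∀ η ρ, (fun e : {e // v ∈ e} => E.symm (η, ρ) e) = η := fun η ρ => by
    funext e
    simp [E, e.2]
  have hW : ∀ η ρ, cubeWeight q (E.symm (η, ρ)) = cubeWeight q η * cubeWeight q ρ :=
    cubeWeight_piEquivPiSubtypeProd_symm _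
  simp only [← E.symm.sum_comp, Fintype.sum_prod_type, hiso, hres, hW, mul_assoc, ← mul_sum,
    ← sum_mul, sum_cubeWeight, one_mul]
  simp only [mul_sum]
  rw [sum_comm]
  exact sum_congr rfl fun _ _ => sum_congr rfl fun _ _ => mul_left_comm _ _ _

lemma sum_cubeWeight_mul_roundIncrement {r a : ℕ} (hq0 : 0 ≤ q) (hq1 : q < 1) (hr : 1 ≤ r)
    (ω₀ : Sym2 (Fin n) → Bool) (v : Fin n) {t : ℕ} (hT : t + 1 ≤ expT r a ω₀) :
    ∑ η : {e : Sym2 (Fin n) // v ∈ e} → Bool, cubeWeight q η *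
      (if #{e ∈ (expZ r a ω₀ t).image (incidentEdge v) | η e} < r then
        roundIncrement r t q #{e ∈ (expZ r a ω₀ (t + 1)).image (incidentEdge v) | η e}
      else 0) = 0 := by
  obtain ⟨u, -, hu, hZ⟩ := expZ_succ_of_ne (le_expT_iff.1 hT t t.lt_succ_self)
  have hu' : incidentEdge v u ∉ (expZ r a ω₀ t).image (incidentEdge v) := by
    simpa [(incidentEdge_injective v).mem_finset_image] using hu
  rw [hZ, image_insert,
    sum_cubeWeight_mul_card_insert hu' fun c c' => if c < r then roundIncrement r t q c' else 0,
    card_image_of_injective _ (incidentEdge_injective v), card_expZ (t.le_succ.trans hT)]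
  exact sum_binomWeight_mul_roundIncrement hq0 hq1 hr t

end Conditioning

lemma indicator_expMseq_succ_sub {n r a : ℕ} {q : ℝ} (hq0 : 0 ≤ q) (hq1 : q < 1) (hr : 1 ≤ r)
    (hN : 0 < n - a) {m : ℕ} {s : Set (Sym2 (Fin n) → Bool)}
    (hs : MeasurableSet[⨆ j ∈ Set.Iic m, MeasurableSpace.comap (expMseq n r a q j)
      (inferInstance : MeasurableSpace ℝ)] s)
    {v : Fin n} (hv : v.val = a + m % (n - a)) (ω : Sym2 (Fin n) → Bool) :
    s.indicator (fun ω => expMseq n r a q (m + 1) ω - expMseq n r a q m ω) ω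
      = s.indicator 1 (isolate v ω) *
        if m / (n - a) + 1 ≤ expT r a (isolate v ω) then
          if nbrCount ω (expZ r a (isolate v ω) (m / (n - a))) v < r then
            roundIncrement r (m / (n - a)) q
              (nbrCount ω (expZ r a (isolate v ω) (m / (n - a) + 1)) v)
          else 0
        else 0 := by
  classical
  rw [Set.indicator_apply, expMseq_succ, expMseq_eq hN, expM_succ_sub_expM (Nat.mod_lt _ hN),
    Nat.add_sub_cancel, expY_succ_sub_expY (v := v) hq0 hq1 hr (Nat.succ_pos _) (by omega)]
  by_cases hc : nbrCount ω (expZ r a (isolate v ω) (m / (n - a))) v < r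
  · have hmem := MeasurableSpace.mem_iff_of_measurableSet_biSup_comap (φ := isolate v)
      (P := fun ω => nbrCount ω (expZ r a (isolate v ω) (m / (n - a))) v < r)
      (fun j hj ω hω => (expMseq_eq_expMseq_isolate hN hr hv hω hj).symm) hs hc
    simp only [Set.indicator_apply, hmem, Pi.one_apply]
    split_ifs <;> simp
  · simp [hc]

theorem setIntegral_expMseq_succ_sub_eq_zero {n r a : ℕ} {q : ℝ} (hq0 : 0 ≤ q) (hq1 : q < 1)
    (hr : 1 ≤ r) (hN : 0 < n - a) {m : ℕ} {s : Set (Sym2 (Fin n) → Bool)}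
    (hs : MeasurableSet[⨆ j ∈ Set.Iic m, MeasurableSpace.comap (expMseq n r a q j)
      (inferInstance : MeasurableSpace ℝ)] s) :
    ∫ ω in s, (expMseq n r a q (m + 1) ω - expMseq n r a q m ω) ∂gnp n q = 0 := by
  set t := m / (n - a)
  let v : Fin n := ⟨a + m % (n - a), by have := Nat.mod_lt m hN; omega⟩
  have hva : a ≤ v.val := Nat.le_add_right a _
  let G (ω₀ : Sym2 (Fin n) → Bool) (η : {e : Sym2 (Fin n) // v ∈ e} → Bool) : ℝ :=
    s.indicator 1 ω₀ * if t + 1 ≤ expT r a ω₀ then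
      if #{e ∈ (expZ r a ω₀ t).image (incidentEdge v) | η e} < r then
        roundIncrement r t q #{e ∈ (expZ r a ω₀ (t + 1)).image (incidentEdge v) | η e}
      else 0
    else 0
  have hpoint : ∀ ω, s.indicator (fun ω => expMseq n r a q (m + 1) ω - expMseq n r a q m ω) ω
      = G (isolate v ω) fun e => ω e := fun ω => by
    rw [indicator_expMseq_succ_sub hq0 hq1 hr hN hs (v := v) rfl,
      nbrCount_eq_card_filter_image ω (notMem_expZ_isolate hr hva _),
      nbrCount_eq_card_filter_image ω (notMem_expZ_isolate hr hva _)]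
  rw [← integral_indicator s.toFinite.measurableSet, gnp, integral_pi_bernoulliMeasure hq0 hq1.le]
  simp only [hpoint]
  rw [sum_cubeWeight_mul_isolate]
  refine sum_eq_zero fun ω _ => mul_eq_zero_of_right _ ?_
  by_cases hT : t + 1 ≤ expT r a (isolate v ω)
  · simp only [G, if_pos hT, mul_left_comm (cubeWeight q _), ← mul_sum,
      sum_cubeWeight_mul_roundIncrement hq0 hq1 hr _ v hT, mul_zero]
  · simp only [G, if_neg hT, mul_zero, sum_const_zero]

theorem exploration_martingale_general (n r a : ℕ) (hr : 2 ≤ r)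
    (q : ℝ) (hq : q ∈ Set.Ioo (0 : ℝ) 1)
    (F : ℕ → MeasurableSpace (Sym2 (Fin n) → Bool))
    (hF : ∀ k, F k = ⨆ j ∈ Set.Iic k, MeasurableSpace.comap (expMseq n r a q j)
      (inferInstance : MeasurableSpace ℝ)) :
    (∀ k, k ≤ n * (n - a) → Measurable[F k] (expMseq n r a q k)) ∧
    (∀ k, k ≤ n * (n - a) → Integrable (expMseq n r a q k) (gnp n q)) ∧
    (∀ k, 1 ≤ k → k ≤ n * (n - a) →
      condExp (F (k - 1)) (gnp n q) (expMseq n r a q k) =ᵐ[gnp n q]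
        expMseq n r a q (k - 1)) := by
  have hadapted : ∀ k, Measurable[F k] (expMseq n r a q k) := fun k =>
    measurable_iff_comap_le.2 (hF k ▸ le_iSup₂_of_le k (Set.mem_Iic.2 le_rfl) le_rfl)
  refine ⟨fun k _ => hadapted k, fun k _ => .of_finite, fun k hk1 hk => ?_⟩
  obtain ⟨m, rfl⟩ := Nat.exists_eq_add_of_le' hk1
  have hN : 0 < n - a := Nat.pos_of_ne_zero fun h => by simp [h] at hk
  rw [Nat.add_sub_cancel]
  refine (ae_eq_condExp_of_forall_setIntegral_eq (fun s _ => s.toFinite.measurableSet)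
    .of_finite (fun _ _ _ => Integrable.of_finite.integrableOn) (fun s hs _ => ?_)
    (hadapted m).aestronglyMeasurable).symm
  rw [eq_comm, ← sub_eq_zero, ← integral_sub .of_finite .of_finite]
  exact setIntegral_expMseq_succ_sub_eq_zero hq.1.le hq.2 (by omega) hN (hF m ▸ hs)

/-- The sequence of random variables `M(0,n-a), M(1,1), …, M(n,n-a)` (indexed linearly by
`k = 0, 1, …, n(n-a)` via `expMseq`) forms a martingale with respect to the filtration
`F(t,i)` generated by the variables up to round `(t,i)`: each `M` is measurable with
respect to its own `σ`-algebra, integrable, and satisfies the conditional-expectation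
martingale identity. -/
theorem exploration_martingale (n r a : ℕ) (hr : 2 ≤ r) (ha1 : 1 ≤ a) (han : a ≤ n)
    (q : ℝ) (hq : q ∈ Set.Ioo (0 : ℝ) 1)
    (F : ℕ → MeasurableSpace (Sym2 (Fin n) → Bool))
    (hF : ∀ k, F k = ⨆ j ∈ Set.Iic k, MeasurableSpace.comap (expMseq n r a q j)
      (inferInstance : MeasurableSpace ℝ)) :
    (∀ k, k ≤ n * (n - a) → Measurable[F k] (expMseq n r a q k)) ∧
    (∀ k, k ≤ n * (n - a) → Integrable (expMseq n r a q k) (gnp n q)) ∧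
    (∀ k, 1 ≤ k → k ≤ n * (n - a) →
      condExp (F (k - 1)) (gnp n q) (expMseq n r a q k) =ᵐ[gnp n q]
        expMseq n r a q (k - 1)) :=
  exploration_martingale_general n r a hr q hq F hF

end
end

section
/- (Lower bound on the survival probability root.) Let ε > 0. Then: (i) for every x with 0 < x < 2ε/(1+2ε), one has exp((1+ε)x) > 1/(1−x); and consequently (ii) the unique solution ρ ∈ (0,1) of 1 − ρ = exp(−(1+ε)ρ) satisfies ρ > 2ε/(1+2ε). -/
/-!
Put `s = -log (1 - x)`, so that `(1 - x)⁻¹ = exp s`. Since `s < sinh s` for `s > 0`,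
`s < ((1 - x)⁻¹ - (1 - x)) / 2 = x (2 - x) / (2 (1 - x))`, and this is at most `(1 + ε) x`
exactly when `(1 + 2ε) x ≤ 2ε`. For the root `ρ` of `1 - ρ = exp (-(1 + ε) ρ)` the two sides
of (i) are equal, so `ρ` cannot lie below the threshold.
-/

open Real

lemma Real.log_lt_sub_inv_div_two {y : ℝ} (hy : 1 < y) : log y < (y - y⁻¹) / 2 := by
  rw [← sinh_log (by linarith)]
  exact self_lt_sinh_iff.2 (log_pos hy)

lemma inv_one_sub_lt_exp_of_mul_le {ε x : ℝ} (hε : 0 < ε) (hx : 0 < x)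
    (h : (1 + 2 * ε) * x ≤ 2 * ε) : (1 - x)⁻¹ < exp ((1 + ε) * x) := by
  have hx1 : 0 < 1 - x := by nlinarith
  rw [← exp_log (inv_pos.2 hx1), exp_lt_exp]
  calc log (1 - x)⁻¹ < ((1 - x)⁻¹ - (1 - x)⁻¹⁻¹) / 2 :=
        log_lt_sub_inv_div_two ((one_lt_inv₀ hx1).2 (by linarith))
    _ = x * (2 - x) / (2 * (1 - x)) := by field_simp; ring
    _ ≤ (1 + ε) * x := by rw [div_le_iff₀ (by positivity)]; nlinarith

/-- **Lower bound on the survival probability root.** Let `ε > 0`. Then (i) for every `x`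
with `0 < x < 2ε/(1+2ε)` one has `exp((1+ε)x) > 1/(1-x)`, and consequently (ii) the
unique solution `ρ ∈ (0,1)` of `1 - ρ = exp(-(1+ε)ρ)` satisfies `ρ > 2ε/(1+2ε)`. -/
theorem survival_root_lower_bound (ε : ℝ) (hε : 0 < ε) :
    (∀ x : ℝ, 0 < x → x < 2 * ε / (1 + 2 * ε) → (1 - x)⁻¹ < Real.exp ((1 + ε) * x)) ∧
    ∀ ρ : ℝ, ρ ∈ Set.Ioo (0 : ℝ) 1 → 1 - ρ = Real.exp (-(1 + ε) * ρ) →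
      2 * ε / (1 + 2 * ε) < ρ := by
  have hden : 0 < 1 + 2 * ε := by linarith
  refine ⟨fun x hx hlt => inv_one_sub_lt_exp_of_mul_le hε hx ?_, fun ρ hρ hroot => ?_⟩
  · rw [lt_div_iff₀ hden] at hlt
    linarith
  · by_contra! hle
    rw [le_div_iff₀ hden] at hle
    have hlt := inv_one_sub_lt_exp_of_mul_le hε hρ.1 (by linarith)
    rw [hroot, ← exp_neg, neg_mul, neg_neg] at hlt
    exact lt_irrefl _ hlt
end
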